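/- Let G be a locally compact second-countable topological group, let M_S ⊆ B(H_S) be a von Neumann algebra, let α : G → Aut(M_S) be a pointwise weak-*-continuous action of G by *-automorphisms implemented by a strongly continuous unitary representation U_S : G → B(H_S) (i.e. α(g)(A) = U_S(g) A U_S(g)* for A ∈ M_S), and let (H_R, U_R, E) be a quantum reference frame for G. Then for every A ∈ M_S the relativised operator ¥(A) = ∫_G α(g)(A) ⊗ dE(g) is invariant under the diagonal action: (U_S(g) ⊗ U_R(g)) ¥(A) (U_S(g) ⊗ U_R(g))* = ¥(A) for all g ∈ G; hence ¥ maps M_S into the invariant algebra (M_S ⊗̄ B(H_R))^G. -/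

import Mathlib

/-!
STATEMENT 4: If the action α of G on M_S is implemented by a strongly continuous unitary
representation U_S, then for every A ∈ M_S the relativised operator
¥(A) = ∫_G α(g)(A) ⊗ dE(g) is invariant under the diagonal action:
(U_S(g) ⊗ U_R(g)) ¥(A) (U_S(g) ⊗ U_R(g))* = ¥(A) for all g ∈ G; hence ¥ maps M_S into
the invariant algebra (M_S ⊗̄ B(H_R))^G.
-/


open MeasureTheory ContinuousLinearMap

noncomputable section

/-- A continuous linear map between Hilbert spaces is unitary. -/
def IsUnitaryCLM {H K : Type*} [NormedAddCommGroup H] [InnerProductSpace ℂ H] [CompleteSpace H]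
    [NormedAddCommGroup K] [InnerProductSpace ℂ K] [CompleteSpace K]
    (V : H →L[ℂ] K) : Prop :=
  ContinuousLinearMap.adjoint V ∘L V = 1 ∧ V ∘L ContinuousLinearMap.adjoint V = 1

/-- An operational quantum reference frame for a locally compact group `G`. -/
structure QRF (G : Type*) [Group G] [TopologicalSpace G] [MeasurableSpace G]
    (HR : Type*) [NormedAddCommGroup HR] [InnerProductSpace ℂ HR] [CompleteSpace HR] where
  U : G → HR →L[ℂ] HR
  U_one : U 1 = 1
  U_mul : ∀ g h : G, U (g * h) = U g ∘L U h
  U_unitary : ∀ g : G, IsUnitaryCLM (U g)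
  U_cont : ∀ ψ : HR, Continuous fun g : G => U g ψ
  E : Set G → HR →L[ℂ] HR
  E_pos : ∀ S : Set G, MeasurableSet S → (E S).IsPositive
  E_univ : E Set.univ = 1
  E_add : ∀ s : ℕ → Set G, (∀ n, MeasurableSet (s n)) →
    Pairwise (Function.onFun Disjoint s) → ∀ ψ φ : HR,
      HasSum (fun n => (inner ℂ ψ (E (s n) φ) : ℂ)) (inner ℂ ψ (E (⋃ n, s n) φ) : ℂ)
  covariant : ∀ (g : G) (S : Set G), MeasurableSet S →
    U g ∘L E S ∘L ContinuousLinearMap.adjoint (U g) = E ((g * ·) '' S)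

/-- A pointwise weak-*-continuous action of `G` on a von Neumann algebra `M` by
`*`-automorphisms. -/
structure VNAction (G : Type*) [Group G] [TopologicalSpace G]
    {H : Type*} [NormedAddCommGroup H] [InnerProductSpace ℂ H] [CompleteSpace H]
    (M : VonNeumannAlgebra H) where
  α : G → (H →L[ℂ] H) → (H →L[ℂ] H)
  mem : ∀ (g : G) (A : H →L[ℂ] H), A ∈ M → α g A ∈ M
  map_add : ∀ (g : G) (A B : H →L[ℂ] H), A ∈ M → B ∈ M → α g (A + B) = α g A + α g B
  map_smul : ∀ (g : G) (c : ℂ) (A : H →L[ℂ] H), A ∈ M → α g (c • A) = c • α g A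
  map_mul : ∀ (g : G) (A B : H →L[ℂ] H), A ∈ M → B ∈ M → α g (A * B) = α g A * α g B
  map_star : ∀ (g : G) (A : H →L[ℂ] H), A ∈ M → α g (star A) = star (α g A)
  one_apply : ∀ A : H →L[ℂ] H, A ∈ M → α 1 A = A
  mul_apply : ∀ (g h : G) (A : H →L[ℂ] H), A ∈ M → α (g * h) A = α g (α h A)
  wcont : ∀ A : H →L[ℂ] H, A ∈ M →
    ∀ ψ φ : H, Continuous fun g : G => (inner ℂ ψ (α g A φ) : ℂ)

/-- A realisation of the Hilbert space tensor product of two Hilbert spaces. -/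
structure HilbertTensor (H K HT : Type*)
    [NormedAddCommGroup H] [InnerProductSpace ℂ H]
    [NormedAddCommGroup K] [InnerProductSpace ℂ K]
    [NormedAddCommGroup HT] [InnerProductSpace ℂ HT] where
  tmul : H →ₗ[ℂ] K →ₗ[ℂ] HT
  inner_tmul : ∀ (x y : H) (u v : K),
    (inner ℂ (tmul x u) (tmul y v) : ℂ) = (inner ℂ x y : ℂ) * (inner ℂ u v : ℂ)
  dense_span : Dense
    ((Submodule.span ℂ {z : HT | ∃ x u, z = tmul x u} : Submodule ℂ HT) : Set HT)

/-- The set of elementary tensor-product operators `A ⊗ B` with `A ∈ MA`, `B ∈ MB`. -/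
def tensorGens {H K HT : Type*}
    [NormedAddCommGroup H] [InnerProductSpace ℂ H]
    [NormedAddCommGroup K] [InnerProductSpace ℂ K]
    [NormedAddCommGroup HT] [InnerProductSpace ℂ HT]
    (ht : HilbertTensor H K HT) (MA : Set (H →L[ℂ] H)) (MB : Set (K →L[ℂ] K)) :
    Set (HT →L[ℂ] HT) :=
  {T | ∃ A ∈ MA, ∃ B ∈ MB, ∀ (x : H) (u : K), T (ht.tmul x u) = ht.tmul (A x) (B u)}

/-- The von Neumann tensor product, as a set of operators: the double commutant of the
elementary tensor-product operators. -/
def vNTensor {H K HT : Type*}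
    [NormedAddCommGroup H] [InnerProductSpace ℂ H]
    [NormedAddCommGroup K] [InnerProductSpace ℂ K]
    [NormedAddCommGroup HT] [InnerProductSpace ℂ HT]
    (ht : HilbertTensor H K HT) (MA : Set (H →L[ℂ] H)) (MB : Set (K →L[ℂ] K)) :
    Set (HT →L[ℂ] HT) :=
  Set.centralizer (Set.centralizer (tensorGens ht MA MB))


/-- Auxiliary: a bounded operator on the tensor product whose matrix elements between
simple tensors all vanish is zero. -/
lemma HilbertTensor.clm_eq_zero' {H K HT : Type*}
    [NormedAddCommGroup H] [InnerProductSpace ℂ H]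
    [NormedAddCommGroup K] [InnerProductSpace ℂ K]
    [NormedAddCommGroup HT] [InnerProductSpace ℂ HT] [CompleteSpace HT]
    (ht : HilbertTensor H K HT) (D : HT →L[ℂ] HT)
    (h : ∀ (x y : H) (u v : K), (inner ℂ (ht.tmul x u) (D (ht.tmul y v)) : ℂ) = 0) :
    D = 0 := by
  have hz : ∀ ψ : HT, (∀ (x : H) (u : K), (inner ℂ (ht.tmul x u) ψ : ℂ) = 0) → ψ = 0 := by
    intro ψ hψ
    have hspan : ∀ z ∈ (Submodule.span ℂ {z : HT | ∃ x u, z = ht.tmul x u} : Submodule ℂ HT),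
        (inner ℂ z ψ : ℂ) = 0 := by
      intro z hzmem
      induction hzmem using Submodule.span_induction with
      | mem x hx => obtain ⟨a, b, rfl⟩ := hx; exact hψ a b
      | zero => simp
      | add x y hx hy ihx ihy => rw [inner_add_left, ihx, ihy, add_zero]
      | smul c x hx ih => rw [inner_smul_left, ih, mul_zero]
    have hcont : Continuous fun z : HT => (inner ℂ z ψ : ℂ) :=
      continuous_id.inner continuous_const
    have := Continuous.ext_on ht.dense_span hcont continuous_const hspan
    have hall : ∀ z : HT, (inner ℂ z ψ : ℂ) = 0 := fun z => congrFun this z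
    exact inner_self_eq_zero.mp (hall ψ)
  have hsimple : ∀ (y : H) (v : K), D (ht.tmul y v) = 0 := fun y v =>
    hz _ (fun x u => h x y u v)
  have hspan2 : ∀ w ∈ (Submodule.span ℂ {z : HT | ∃ x u, z = ht.tmul x u} : Submodule ℂ HT),
      D w = (0 : HT →L[ℂ] HT) w := by
    intro w hw
    induction hw using Submodule.span_induction with
    | mem x hx => obtain ⟨a, b, rfl⟩ := hx; simpa using hsimple a b
    | zero => simp
    | add x y hx hy ihx ihy => simp only [map_add, ihx, ihy]
    | smul c x hx ih => rw [ContinuousLinearMap.map_smul, ih]; simp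
  have := Continuous.ext_on ht.dense_span D.continuous (0 : HT →L[ℂ] HT).continuous hspan2
  exact ContinuousLinearMap.ext fun w => congrFun this w

/-- Suppose `α` is implemented by a strongly continuous unitary
representation `U_S` (`α(g)(A) = U_S(g) A U_S(g)*`), and let `UT g = U_S(g) ⊗ U_R(g)` be
the corresponding diagonal unitaries on `H_S ⊗ H_R`.  Then for every `A ∈ M_S` the
relativised operator `T = ¥(A)` satisfies `(UT g) T (UT g)* = T` for all `g ∈ G`; hence
`¥` maps `M_S` into the invariant algebra `(M_S ⊗̄ B(H_R))^G`. -/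
theorem relativisation_is_invariant
    (G : Type*) [Group G] [TopologicalSpace G] [IsTopologicalGroup G]
    [LocallyCompactSpace G] [SecondCountableTopology G] [MeasurableSpace G] [BorelSpace G]
    (HS : Type*) [NormedAddCommGroup HS] [InnerProductSpace ℂ HS] [CompleteSpace HS]
    (HR : Type*) [NormedAddCommGroup HR] [InnerProductSpace ℂ HR] [CompleteSpace HR]
    (M : VonNeumannAlgebra HS) (act : VNAction G M) (R : QRF G HR)
    -- a strongly continuous unitary representation implementing the action `α`
    (US : G → HS →L[ℂ] HS)
    (hUS_one : US 1 = 1)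
    (hUS_mul : ∀ g h : G, US (g * h) = US g ∘L US h)
    (hUS_unitary : ∀ g : G, IsUnitaryCLM (US g))
    (hUS_cont : ∀ ξ : HS, Continuous fun g : G => US g ξ)
    (hUS_impl : ∀ (g : G) (A : HS →L[ℂ] HS), A ∈ M →
      act.α g A = US g ∘L A ∘L ContinuousLinearMap.adjoint (US g))
    (HT : Type*) [NormedAddCommGroup HT] [InnerProductSpace ℂ HT] [CompleteSpace HT]
    (ht : HilbertTensor HS HR HT)
    -- the diagonal unitaries `UT g = U_S(g) ⊗ U_R(g)` on `H_S ⊗ H_R`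
    (UT : G → HT →L[ℂ] HT)
    (hUT_unitary : ∀ g : G, IsUnitaryCLM (UT g))
    (hUT : ∀ (g : G) (x : HS) (u : HR), UT g (ht.tmul x u) = ht.tmul (US g x) (R.U g u))
    -- the measures `E_{χ,χ} : S ↦ ⟨χ, E(S) χ⟩` induced by the POVM
    (meas : HR → Measure G)
    (hmeas : ∀ (χ : HR) (S : Set G), MeasurableSet S →
      meas χ S = ENNReal.ofReal (inner ℂ χ (R.E S χ) : ℂ).re)
    (A : HS →L[ℂ] HS) (hA : A ∈ M)
    -- the relativisation `T = ¥(A) = ∫_G α(g)(A) ⊗ dE(g)`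
    (T : HT →L[ℂ] HT)
    (hT : ∀ (ξ η : HS) (χ : HR),
      (inner ℂ (ht.tmul ξ χ) (T (ht.tmul η χ)) : ℂ)
        = ∫ g : G, (inner ℂ ξ (act.α g A η) : ℂ) ∂(meas χ))
    (hTmem : T ∈ vNTensor ht (M : Set (HS →L[ℂ] HS)) Set.univ) :
    (∀ g : G, UT g ∘L T ∘L ContinuousLinearMap.adjoint (UT g) = T) ∧
      T ∈ {X ∈ vNTensor ht (M : Set (HS →L[ℂ] HS)) Set.univ |
        ∀ g : G, UT g ∘L X ∘L ContinuousLinearMap.adjoint (UT g) = X} := by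
  suffices key : ∀ g : G, UT g ∘L T ∘L ContinuousLinearMap.adjoint (UT g) = T by
    exact ⟨key, hTmem, key⟩
  intro g
  -- pointwise facts about the unitaries and their adjoints
  have hUSr : ∀ x : HS, US g (ContinuousLinearMap.adjoint (US g) x) = x := fun x => by
    have := ContinuousLinearMap.ext_iff.mp (hUS_unitary g).2 x
    simpa using this
  have hURr : ∀ u : HR, R.U g (ContinuousLinearMap.adjoint (R.U g) u) = u := fun u => by
    have := ContinuousLinearMap.ext_iff.mp (R.U_unitary g).2 u
    simpa using this
  have hUTadj : ∀ (x : HS) (u : HR),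
      ContinuousLinearMap.adjoint (UT g) (ht.tmul x u)
        = ht.tmul (ContinuousLinearMap.adjoint (US g) x)
            (ContinuousLinearMap.adjoint (R.U g) u) := by
    intro x u
    have h1 : UT g (ht.tmul (ContinuousLinearMap.adjoint (US g) x)
        (ContinuousLinearMap.adjoint (R.U g) u)) = ht.tmul x u := by
      rw [hUT, hUSr, hURr]
    have h2 := ContinuousLinearMap.ext_iff.mp (hUT_unitary g).1
        (ht.tmul (ContinuousLinearMap.adjoint (US g) x)
          (ContinuousLinearMap.adjoint (R.U g) u))
    simp only [ContinuousLinearMap.comp_apply, ContinuousLinearMap.one_apply] at h2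
    rw [← h1]
    exact h2
  -- covariance of the induced measures
  have hφmeas : Measurable fun h : G => g⁻¹ * h :=
    (continuous_const.mul continuous_id).measurable
  have hmap : ∀ χ : HR, meas (ContinuousLinearMap.adjoint (R.U g) χ)
      = Measure.map (fun h : G => g⁻¹ * h) (meas χ) := by
    intro χ
    refine MeasureTheory.Measure.ext fun S hS => ?_
    rw [MeasureTheory.Measure.map_apply hφmeas hS]
    have himg : (fun h : G => g⁻¹ * h) ⁻¹' S = (g * ·) '' S := by
      ext h
      constructor
      · intro hh
        exact ⟨g⁻¹ * h, hh, by group⟩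
      · rintro ⟨s, hs, rfl⟩
        simpa using hs
    rw [himg]
    have hSm : MeasurableSet ((g * ·) '' S) := by rw [← himg]; exact hφmeas hS
    rw [hmeas _ S hS, hmeas _ _ hSm]
    congr 2
    have hcov := R.covariant g S hS
    calc (inner ℂ (ContinuousLinearMap.adjoint (R.U g) χ)
          (R.E S (ContinuousLinearMap.adjoint (R.U g) χ)) : ℂ)
        = inner ℂ χ ((R.U g ∘L R.E S ∘L ContinuousLinearMap.adjoint (R.U g)) χ) := by
          rw [ContinuousLinearMap.adjoint_inner_left]
          rfl
      _ = inner ℂ χ (R.E ((g * ·) '' S) χ) := by rw [hcov]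
  -- the integrand transforms correctly
  have hpt : ∀ (ξ η : HS) (h : G),
      (inner ℂ (ContinuousLinearMap.adjoint (US g) ξ)
        (act.α (g⁻¹ * h) A (ContinuousLinearMap.adjoint (US g) η)) : ℂ)
        = inner ℂ ξ (act.α h A η) := by
    intro ξ η h
    rw [hUS_impl (g⁻¹ * h) A hA, hUS_impl h A hA]
    have hh : US h = US g ∘L US (g⁻¹ * h) := by
      rw [← hUS_mul]
      congr 1
      group
    rw [ContinuousLinearMap.adjoint_inner_left]
    rw [hh, ContinuousLinearMap.adjoint_comp]
    simp [ContinuousLinearMap.comp_apply]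
  -- diagonal matrix elements agree
  have diag : ∀ (ξ η : HS) (χ : HR),
      (inner ℂ (ht.tmul ξ χ)
        ((UT g ∘L T ∘L ContinuousLinearMap.adjoint (UT g)) (ht.tmul η χ)) : ℂ)
        = inner ℂ (ht.tmul ξ χ) (T (ht.tmul η χ)) := by
    intro ξ η χ
    have step1 : (inner ℂ (ht.tmul ξ χ)
        ((UT g ∘L T ∘L ContinuousLinearMap.adjoint (UT g)) (ht.tmul η χ)) : ℂ)
        = inner ℂ (ContinuousLinearMap.adjoint (UT g) (ht.tmul ξ χ))
            (T (ContinuousLinearMap.adjoint (UT g) (ht.tmul η χ))) := by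
      rw [ContinuousLinearMap.adjoint_inner_left]
      rfl
    rw [step1, hUTadj, hUTadj, hT, hT, hmap χ]
    have hcont2 : Continuous fun k : G =>
        (inner ℂ (ContinuousLinearMap.adjoint (US g) ξ)
          (act.α k A (ContinuousLinearMap.adjoint (US g) η)) : ℂ) :=
      act.wcont A hA _ _
    rw [MeasureTheory.integral_map hφmeas.aemeasurable hcont2.aestronglyMeasurable]
    exact integral_congr_ae (Filter.Eventually.of_forall fun h => hpt ξ η h)
  -- polarization: all matrix elements of the difference vanish
  set D : HT →L[ℂ] HT := (UT g ∘L T ∘L ContinuousLinearMap.adjoint (UT g)) - T with hD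
  have diag0 : ∀ (ξ η : HS) (χ : HR),
      (inner ℂ (ht.tmul ξ χ) (D (ht.tmul η χ)) : ℂ) = 0 := by
    intro ξ η χ
    rw [hD]
    simp only [ContinuousLinearMap.sub_apply, inner_sub_right]
    rw [diag ξ η χ, sub_self]
  have off : ∀ (ξ η : HS) (χ χ' : HR),
      (inner ℂ (ht.tmul ξ χ) (D (ht.tmul η χ')) : ℂ) = 0 := by
    intro ξ η χ χ'
    have h1 := diag0 ξ η (χ + χ')
    have h2 := diag0 ξ η (χ + Complex.I • χ')
    simp only [map_add, LinearMap.map_smul, ContinuousLinearMap.map_add,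
      ContinuousLinearMap.map_smul, inner_add_left, inner_add_right, inner_smul_left,
      inner_smul_right, Complex.conj_I, diag0] at h1 h2
    set a := (inner ℂ (ht.tmul ξ χ) (D (ht.tmul η χ')) : ℂ) with ha
    set b := (inner ℂ (ht.tmul ξ χ') (D (ht.tmul η χ)) : ℂ) with hb
    have h1' : a + b = 0 := by linear_combination h1
    have h2' : (2 * Complex.I) * a = 0 := by
      linear_combination h2 + Complex.I * h1'
    have hne : (2 * Complex.I) ≠ 0 := by
      simp [Complex.I_ne_zero]
    exact (mul_eq_zero.mp h2').resolve_left hne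
  have hDzero : D = 0 := ht.clm_eq_zero' D (fun x y u v => off x y u v)
  have := sub_eq_zero.mp hDzero
  exact this


end
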